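/- arXiv:1703.01152 — 6 statements merged into one kernel-verified Lean document; each statement's English description precedes it below -/
import Mathlib

section
/- Suppose the fixed space Fix_V(G) of a finite group G ≤ GL(Λ) acting on V has dimension 1. Then for any point z, there is at most one point w in the orbit of z under the normalizer N_{GL(Λ)}(G) such that w ≠ z and w is translation equivalent to z (i.e., w − z ∈ Fix_Λ(G)). -/
/-!
Let `S` be in the normalizer with `S z = z + λ`, `0 ≠ λ ∈ Fix_Λ(G)`. The averaging projection
`e` onto the line `Fix_V(G)` commutes with `S`, so `S` acts on that line by a scalar `c`; as `S`
and `S⁻¹` preserve the lattice, the integer coordinates of `cⁿ λ` force `|c| = 1`. Applying `e`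
to `S z = z + λ` gives `(c - 1) e z = λ`, so `c = -1` and `S z = z - 2 e z`, which does not
depend on `S`.
-/

open Module Set

namespace Representation

variable {k G V : Type*} [CommRing k] [Group G] [Fintype G] [Invertible (Fintype.card G : k)]
  [AddCommGroup V] [Module k V] (ρ : Representation k G V)

theorem averageMap_apply (v : V) :
    ρ.averageMap v = ⅟(Fintype.card G : k) • ∑ g : G, ρ g v := by
  simp [GroupAlgebra.average, map_sum]

theorem apply_averageMap_of_conj {T : V →ₗ[k] V} (σ : G ≃ G)
    (hT : ∀ g v, T (ρ g v) = ρ (σ g) (T v)) (v : V) :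
    T (ρ.averageMap v) = ρ.averageMap (T v) := by
  simp only [averageMap_apply, map_smul, map_sum, hT]
  rw [Equiv.sum_comp σ (fun g => ρ g (T v))]

end Representation

theorem LinearMap.exists_apply_eq_smul_of_finrank_eq_one {K V : Type*} [Field K]
    [AddCommGroup V] [Module K V] {F : Submodule K V} (hF : finrank K F = 1)
    {f : V →ₗ[K] V} (hfF : ∀ x ∈ F, f x ∈ F) : ∃ c : K, ∀ x ∈ F, f x = c • x := by
  obtain ⟨c, hc, -⟩ := (f.restrict hfF).existsUnique_eq_smul_id_of_finrank_eq_one hF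
  exact ⟨c, fun x hx => congrArg Subtype.val (LinearMap.congr_fun hc ⟨x, hx⟩)⟩

theorem one_le_abs_of_forall_pow_mul_mem_range_intCast {c r : ℝ} (hc : c ≠ 0) (hr : r ≠ 0)
    (h : ∀ n : ℕ, c ^ n * r ∈ range ((↑) : ℤ → ℝ)) : 1 ≤ |c| := by
  by_contra! hlt
  obtain ⟨n, hn⟩ := exists_pow_lt_of_lt_one (abs_pos.mpr hr |> inv_pos.mpr) hlt
  obtain ⟨m, hm⟩ := h n
  have hm0 : m ≠ 0 := by
    rintro rfl
    exact mul_ne_zero (pow_ne_zero n hc) hr (by simpa using hm.symm)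
  have : |(m : ℝ)| < 1 := by
    rw [hm, abs_mul, abs_pow]
    calc |c| ^ n * |r| < |r|⁻¹ * |r| := by gcongr
      _ = 1 := inv_mul_cancel₀ (abs_ne_zero.mpr hr)
  exact absurd this (not_lt.mpr (by exact_mod_cast Int.one_le_abs hm0))

theorem pow_smul_mem_of_mapsTo {K V : Type*} [CommSemiring K] [AddCommMonoid V] [Module K V]
    {f : V →ₗ[K] V} {s : Set V} (hf : MapsTo f s s) {c : K} {v : V} (hv : v ∈ s)
    (hfv : f v = c • v) (n : ℕ) : c ^ n • v ∈ s := by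
  induction n with
  | zero => simpa using hv
  | succ n ih => simpa [pow_succ', mul_smul, hfv, smul_comm c] using hf ih

theorem abs_eq_one_of_apply_eq_smul {ι V : Type*} [AddCommGroup V] [Module ℝ V]
    (b : Basis ι ℝ V) {Λ : Submodule ℤ V} (hΛ : Λ ≤ Submodule.span ℤ (range b))
    {S : V ≃ₗ[ℝ] V} (hS : S '' Λ = Λ) {v : V} (hv : v ∈ Λ) (hv0 : v ≠ 0) {c : ℝ} (hSv : S v = c • v) :
    |c| = 1 := by
  have hc : c ≠ 0 := by
    rintro rfl
    exact hv0 (S.map_eq_zero_iff.mp (by simpa using hSv))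
  have hSsymm : S.symm v = c⁻¹ • v := by
    rw [S.symm_apply_eq, map_smul, hSv, smul_smul, inv_mul_cancel₀ hc, one_smul]
  have hmaps : MapsTo S Λ Λ := fun x hx => hS ▸ mem_image_of_mem S hx
  have hmaps_symm : MapsTo S.symm Λ Λ := by
    intro x hx
    rw [← hS] at hx
    obtain ⟨y, hy, rfl⟩ := hx
    simpa using hy
  obtain ⟨i, hi⟩ : ∃ i, b.repr v i ≠ 0 := by
    by_contra! h
    exact hv0 (b.repr.injective (Finsupp.ext (by simpa using h)))
  have coord_mem (d : ℝ) (hd : ∀ n : ℕ, d ^ n • v ∈ Λ) (n : ℕ) :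
      d ^ n * b.repr v i ∈ range ((↑) : ℤ → ℝ) := by
    simpa using (b.mem_span_iff_repr_mem ℤ _).mp (hΛ (hd n)) i
  have h1 := one_le_abs_of_forall_pow_mul_mem_range_intCast hc hi
    (coord_mem c (pow_smul_mem_of_mapsTo (f := S.toLinearMap) hmaps hv hSv))
  have h2 := one_le_abs_of_forall_pow_mul_mem_range_intCast (inv_ne_zero hc) hi
    (coord_mem c⁻¹ (pow_smul_mem_of_mapsTo (f := S.symm.toLinearMap) hmaps_symm hv hSsymm))
  rw [abs_inv, one_le_inv₀ (abs_pos.mpr hc)] at h2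
  exact le_antisymm h2 h1

theorem LinearMap.IsProj.apply_sub_self_eq_smul {K V : Type*} [CommRing K] [AddCommGroup V]
    [Module K V] {F : Submodule K V} {e : V →ₗ[K] V} (he : LinearMap.IsProj F e)
    {S : V →ₗ[K] V} (hSe : ∀ v, S (e v) = e (S v)) {c : K} (hc : ∀ x ∈ F, S x = c • x)
    {z : V} (hz : S z - z ∈ F) : S z - z = (c - 1) • e z := by
  have h : e (S z) = e z + (S z - z) := by
    rw [← he.map_id _ hz, ← map_add, add_sub_cancel]
  rw [← hSe, hc _ (he.map_mem z)] at h
  rw [sub_smul, one_smul, h, add_sub_cancel_left]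

theorem apply_eq_sub_two_smul_averageMap {ι V : Type*} [AddCommGroup V] [Module ℝ V]
    (b : Basis ι ℝ V) {Λ : Submodule ℤ V} (hΛ : Λ ≤ Submodule.span ℤ (range b))
    {G : Subgroup (V ≃ₗ[ℝ] V)} [Fintype G]
    (hdim : finrank ℝ (Representation.ofDistribMulAction ℝ G V).invariants = 1)
    {S : V ≃ₗ[ℝ] V} (hSΛ : S '' Λ = Λ) (hSN : S ∈ Subgroup.normalizer (G : Set (V ≃ₗ[ℝ] V)))
    {z : V} (hne : S z ≠ z) (hzΛ : S z - z ∈ Λ)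
    (hzF : S z - z ∈ (Representation.ofDistribMulAction ℝ G V).invariants) :
    S z = z - (2 : ℝ) • (Representation.ofDistribMulAction ℝ G V).averageMap z := by
  set ρ := Representation.ofDistribMulAction ℝ G V
  set e := ρ.averageMap
  have he := ρ.isProj_averageMap
  have hSe : ∀ v, S (e v) = e (S v) :=
    ρ.apply_averageMap_of_conj (T := S.toLinearMap)
      (G.normalizerMonoidHom ⟨S, hSN⟩).toEquiv fun g v => by
        simp [ρ, Subgroup.smul_def, Subgroup.normalizerMonoidHom_apply_apply_coe]
  obtain ⟨c, hc⟩ := S.toLinearMap.exists_apply_eq_smul_of_finrank_eq_one hdim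
    fun x hx => by
      change S x ∈ ρ.invariants
      rw [← he.map_id x hx, hSe]
      exact he.map_mem _
  have hc1 : |c| = 1 := abs_eq_one_of_apply_eq_smul b hΛ hSΛ hzΛ (sub_ne_zero.mpr hne) (hc _ hzF)
  have hsub := he.apply_sub_self_eq_smul hSe hc hzF
  rcases (abs_eq zero_le_one).mp hc1 with rfl | rfl
  · exact absurd (by simpa using hsub) (sub_ne_zero.mpr hne)
  · rw [sub_eq_iff_eq_add] at hsub
    simp only [LinearEquiv.coe_coe] at hsub
    rw [hsub]
    module

theorem stmt_1_general {V : Type*} [AddCommGroup V] [Module ℝ V]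
    {ι : Type*} (bV : Module.Basis ι ℝ V)
    (Λ : Submodule ℤ V) (hΛ : (Λ : Set V) = ↑(Submodule.span ℤ (Set.range ⇑bV)))
    (G : Subgroup (V ≃ₗ[ℝ] V)) (hGfin : Finite G)
    (F : Submodule ℝ V) (hF : ∀ v, v ∈ F ↔ ∀ g ∈ G, g v = v)
    (hdim : Module.finrank ℝ F = 1)
    (z : V) :
    ∀ w₁ w₂ : V,
      ((∃ S : V ≃ₗ[ℝ] V, ⇑S '' (Λ : Set V) = (Λ : Set V) ∧ S ∈ Subgroup.normalizer (G : Set (V ≃ₗ[ℝ] V)) ∧ w₁ = S z) ∧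
        w₁ ≠ z ∧ w₁ - z ∈ Λ ∧ w₁ - z ∈ F) →
      ((∃ S : V ≃ₗ[ℝ] V, ⇑S '' (Λ : Set V) = (Λ : Set V) ∧ S ∈ Subgroup.normalizer (G : Set (V ≃ₗ[ℝ] V)) ∧ w₂ = S z) ∧
        w₂ ≠ z ∧ w₂ - z ∈ Λ ∧ w₂ - z ∈ F) →
      w₁ = w₂ := by
  have : Fintype G := Fintype.ofFinite G
  have hF : F = (Representation.ofDistribMulAction ℝ G V).invariants := by
    ext v
    simp [hF, Representation.mem_invariants, Subgroup.smul_def, LinearEquiv.smul_def]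
  subst hF
  have hΛ : Λ ≤ Submodule.span ℤ (range bV) := SetLike.coe_subset_coe.mp hΛ.le
  rintro w₁ w₂ ⟨⟨S₁, hS₁Λ, hS₁N, rfl⟩, hne₁, hΛ₁, hF₁⟩ ⟨⟨S₂, hS₂Λ, hS₂N, rfl⟩, hne₂, hΛ₂, hF₂⟩
  rw [apply_eq_sub_two_smul_averageMap bV hΛ hdim hS₁Λ hS₁N hne₁ hΛ₁ hF₁,
    apply_eq_sub_two_smul_averageMap bV hΛ hdim hS₂Λ hS₂N hne₂ hΛ₂ hF₂]

/-- If the fixed space of `G` on `V` is one-dimensional, then for any point `z`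
there is at most one point `w` in the orbit of `z` under the normalizer of `G` in `GL(Λ)`
with `w ≠ z` and `w` translation equivalent to `z` (i.e. `w - z ∈ Fix_Λ(G)`). -/
theorem stmt_1 {V : Type*} [AddCommGroup V] [Module ℝ V] [FiniteDimensional ℝ V]
    {ι : Type*} [Fintype ι] (bV : Module.Basis ι ℝ V)
    (Λ : Submodule ℤ V) (hΛ : (Λ : Set V) = ↑(Submodule.span ℤ (Set.range ⇑bV)))
    (G : Subgroup (V ≃ₗ[ℝ] V)) (hGfin : Finite G)
    (hGΛ : ∀ g ∈ G, ⇑g '' (Λ : Set V) = (Λ : Set V))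
    (F : Submodule ℝ V) (hF : ∀ v, v ∈ F ↔ ∀ g ∈ G, g v = v)
    (hdim : Module.finrank ℝ F = 1)
    (z : V) :
    ∀ w₁ w₂ : V,
      ((∃ S : V ≃ₗ[ℝ] V, ⇑S '' (Λ : Set V) = (Λ : Set V) ∧ S ∈ Subgroup.normalizer (G : Set (V ≃ₗ[ℝ] V)) ∧ w₁ = S z) ∧
        w₁ ≠ z ∧ w₁ - z ∈ Λ ∧ w₁ - z ∈ F) →
      ((∃ S : V ≃ₗ[ℝ] V, ⇑S '' (Λ : Set V) = (Λ : Set V) ∧ S ∈ Subgroup.normalizer (G : Set (V ≃ₗ[ℝ] V)) ∧ w₂ = S z) ∧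
        w₂ ≠ z ∧ w₂ - z ∈ Λ ∧ w₂ - z ∈ F) →
      w₁ = w₂ :=
  stmt_1_general bV Λ hΛ G hGfin F hF hdim z
end

section
/- If R₁ ⊆ R₂ are orders in a finite-dimensional Q-algebra A, then the index of the unit group R₁ˣ in R₂ˣ is finite. -/
/-- An order in a finite-dimensional `ℚ`-algebra `A`. -/
def IsOrder {A : Type*} [Ring A] [Algebra ℚ A] (R : Subring A) : Prop :=
  Submodule.span ℚ (R : Set A) = ⊤ ∧ (AddSubgroup.toIntSubmodule R.toAddSubgroup).FG

/-- `x` is a unit of the subring `R`. -/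
def IsUnitOf {A : Type*} [Ring A] (R : Subring A) (x : A) : Prop :=
  x ∈ R ∧ ∃ y ∈ R, x * y = 1 ∧ y * x = 1

/-- Every element of the `ℚ`-span of a subring admits a nonzero integer multiple lying in the
subring. -/
lemma exists_int_smul_mem_aux {A : Type*} [Ring A] [Algebra ℚ A] (R : Subring A)
    {x : A} (hx : x ∈ Submodule.span ℚ (R : Set A)) :
    ∃ n : ℤ, n ≠ 0 ∧ n • x ∈ R := by
  induction hx using Submodule.span_induction with
  | mem x h => exact ⟨1, one_ne_zero, by simpa using h⟩
  | zero => exact ⟨1, one_ne_zero, by simpa using R.zero_mem⟩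
  | add x y hx hy ihx ihy =>
    obtain ⟨n₁, hn₁, h₁⟩ := ihx
    obtain ⟨n₂, hn₂, h₂⟩ := ihy
    refine ⟨n₁ * n₂, mul_ne_zero hn₁ hn₂, ?_⟩
    have : (n₁ * n₂) • (x + y) = n₂ • (n₁ • x) + n₁ • (n₂ • y) := by
      rw [smul_add, ← mul_smul, ← mul_smul, mul_comm n₂ n₁]
    rw [this]
    exact R.add_mem (R.toAddSubgroup.zsmul_mem h₁ n₂) (R.toAddSubgroup.zsmul_mem h₂ n₁)
  | smul q x hx ih =>
    obtain ⟨n, hn, h⟩ := ih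
    refine ⟨(q.den : ℤ) * n, mul_ne_zero (Int.natCast_ne_zero.mpr q.den_nz) hn, ?_⟩
    have hden : (q.den : ℚ) * q = (q.num : ℚ) := by
      rw [mul_comm]; exact_mod_cast Rat.mul_den_eq_num q
    have : ((q.den : ℤ) * n) • (q • x) = q.num • (n • x) := by
      rw [smul_smul q.num n, ← Int.cast_smul_eq_zsmul ℚ (q.num * n),
        ← Int.cast_smul_eq_zsmul ℚ ((q.den : ℤ) * n), smul_smul]
      congr 1
      push_cast
      rw [mul_assoc, mul_comm (n : ℚ) q, ← mul_assoc, hden]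
    rw [this]
    exact R.toAddSubgroup.zsmul_mem h q.num

/-- There is a nonzero integer `m` with `m • R₂ ⊆ R₁`. -/
lemma exists_int_smul_subset {A : Type*} [Ring A] [Algebra ℚ A]
    (R₁ R₂ : Subring A) (h₁ : IsOrder R₁) (h₂ : IsOrder R₂) :
    ∃ m : ℤ, m ≠ 0 ∧ ∀ x ∈ R₂, m • x ∈ R₁ := by
  classical
  obtain ⟨S, hS⟩ := h₂.2
  choose n hn hnm using fun s : A =>
    exists_int_smul_mem_aux R₁ (h₁.1 ▸ Submodule.mem_top : s ∈ Submodule.span ℚ (R₁ : Set A))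
  refine ⟨∏ s ∈ S, n s, Finset.prod_ne_zero_iff.mpr fun s _ => hn s, ?_⟩
  set m : ℤ := ∏ s ∈ S, n s with hm
  let C : Submodule ℤ A :=
    { carrier := {x | m • x ∈ R₁}
      add_mem' := fun {a b} ha hb => show m • (a + b) ∈ R₁ by
        rw [smul_add]; exact R₁.add_mem ha hb
      zero_mem' := show m • (0 : A) ∈ R₁ by rw [smul_zero]; exact R₁.zero_mem
      smul_mem' := fun c x hx => show m • (c • x) ∈ R₁ by
        rw [smul_comm]; exact R₁.toAddSubgroup.zsmul_mem hx c }
  have hspan : Submodule.span ℤ (S : Set A) ≤ C := by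
    rw [Submodule.span_le]
    intro s hs
    have : m = n s * ∏ t ∈ S.erase s, n t := (Finset.mul_prod_erase S n hs).symm
    show m • s ∈ R₁
    rw [this, mul_comm, mul_smul]
    exact R₁.toAddSubgroup.zsmul_mem (hnm s) _
  intro x hx
  have : x ∈ Submodule.span ℤ (S : Set A) := by
    rw [hS]; exact hx
  exact hspan this

/-- If `R₁ ⊆ R₂` are orders in a finite-dimensional `ℚ`-algebra, then the unit
group of `R₁` has finite index in the unit group of `R₂`: finitely many cosets `t • R₁ˣ`
cover `R₂ˣ`. -/
theorem stmt_4 {A : Type*} [Ring A] [Algebra ℚ A] [FiniteDimensional ℚ A]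
    (R₁ R₂ : Subring A) (h₁ : IsOrder R₁) (h₂ : IsOrder R₂) (hle : R₁ ≤ R₂) :
    ∃ T : Finset A, ∀ u : A, IsUnitOf R₂ u →
      ∃ t ∈ T, IsUnitOf R₂ t ∧ ∃ w : A, IsUnitOf R₁ w ∧ u = t * w := by
  classical
  obtain ⟨m, hm0, hm⟩ := exists_int_smul_subset R₁ R₂ h₁ h₂
  set N₂ : Submodule ℤ A := AddSubgroup.toIntSubmodule R₂.toAddSubgroup with hN₂
  have memN₂ : ∀ x : A, x ∈ N₂ ↔ x ∈ R₂ := fun x => Iff.rfl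
  haveI : Module.Finite ℤ N₂ := Module.Finite.iff_fg.mpr h₂.2
  set N : Submodule ℤ N₂ := LinearMap.range (m • (LinearMap.id : N₂ →ₗ[ℤ] N₂)) with hN
  set Q := N₂ ⧸ N with hQ
  have htor : Module.IsTorsion ℤ Q := by
    intro q
    refine ⟨⟨m, mem_nonZeroDivisors_of_ne_zero hm0⟩, ?_⟩
    obtain ⟨x, rfl⟩ := Submodule.Quotient.mk_surjective N q
    rw [Submonoid.smul_def, ← Submodule.Quotient.mk_smul, Submodule.Quotient.mk_eq_zero]
    exact ⟨x, by simp⟩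
  haveI : Finite Q := Module.finite_of_fg_torsion Q htor
  haveI : Fintype Q := Fintype.ofFinite Q
  -- pairs of mutually inverse elements of R₂
  set P : Set (N₂ × N₂) := {p | (p.1 : A) * p.2 = 1 ∧ (p.2 : A) * p.1 = 1} with hP
  set F : N₂ × N₂ → Q := fun p => Submodule.Quotient.mk p.1 with hF
  set rep : Q → N₂ × N₂ := fun q => if h : q ∈ F '' P then h.choose else (0, 0) with hrep
  refine ⟨Finset.univ.image fun q => ((rep q).1 : A), ?_⟩
  rintro u ⟨huR, y, hyR, huy, hyu⟩
  set uu : N₂ := ⟨u, huR⟩ with huu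
  set yy : N₂ := ⟨y, hyR⟩ with hyy
  have hpP : (uu, yy) ∈ P := ⟨huy, hyu⟩
  have hq : F (uu, yy) ∈ F '' P := Set.mem_image_of_mem F hpP
  have hrepq : rep (F (uu, yy)) = hq.choose := dif_pos hq
  obtain ⟨hchooseP, hchooseF⟩ := hq.choose_spec
  set tt : N₂ := hq.choose.1 with htt
  set tinv : N₂ := hq.choose.2 with htinvdef
  set t : A := (tt : A) with ht
  set t' : A := (tinv : A) with ht'
  have htt' : t * t' = 1 := hchooseP.1
  have ht't : t' * t = 1 := hchooseP.2
  have htR : t ∈ R₂ := tt.2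
  have ht'R : t' ∈ R₂ := tinv.2
  -- congruence: uu - tt ∈ N
  have hcong : uu - tt ∈ N := by
    rw [← Submodule.Quotient.eq]
    exact (hchooseF : Submodule.Quotient.mk tt = Submodule.Quotient.mk uu).symm
  obtain ⟨zz, hzz⟩ := hcong
  have hz : u - t = m • (zz : A) := by
    have := congrArg (Subtype.val) hzz
    simpa using this.symm
  have hzR : (zz : A) ∈ R₂ := zz.2
  -- the unit w of R₁
  refine ⟨t, Finset.mem_image.mpr ⟨F (uu, yy), Finset.mem_univ _, by rw [hrepq]⟩,
    ⟨htR, t', ht'R, htt', ht't⟩, t' * u, ⟨?_, y * t, ?_, ?_, ?_⟩, ?_⟩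
  · -- t' * u ∈ R₁
    have : t' * u = 1 + m • (t' * (zz : A)) := by
      have : u = t + m • (zz : A) := by rw [← hz]; abel
      rw [this, mul_add, ht't, mul_smul_comm]
    rw [this]
    exact R₁.add_mem R₁.one_mem (hm _ (R₂.mul_mem ht'R hzR))
  · -- y * t ∈ R₁
    have : y * t = 1 - m • (y * (zz : A)) := by
      have : t = u - m • (zz : A) := by rw [← hz]; abel
      rw [this, mul_sub, hyu, mul_smul_comm]
    rw [this]
    exact R₁.sub_mem R₁.one_mem (hm _ (R₂.mul_mem hyR hzR))
  · -- (t' * u) * (y * t) = 1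
    calc (t' * u) * (y * t) = t' * (u * y) * t := by simp [mul_assoc]
    _ = 1 := by rw [huy, mul_one, ht't]
  · -- (y * t) * (t' * u) = 1
    calc (y * t) * (t' * u) = y * (t * t') * u := by simp [mul_assoc]
    _ = 1 := by rw [htt', mul_one, hyu]
  · rw [← mul_assoc, htt', one_mul]
end

section
/- If R₁ and R₂ are two orders in the same finite-dimensional Q-algebra A, then the unit group of R₁ is finite if and only if the unit group of R₂ is finite. -/
open Pointwise

lemma denom_clear {A : Type*} [Ring A] [Algebra ℚ A] (R : Subring A) (x : A)
    (hx : x ∈ Submodule.span ℚ (R : Set A)) : ∃ n : ℕ, 0 < n ∧ (n : ℤ) • x ∈ R := by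
  induction hx using Submodule.span_induction with
  | mem x hx => exact ⟨1, one_pos, by simpa using hx⟩
  | zero => exact ⟨1, one_pos, by simpa using R.zero_mem⟩
  | add x y _ _ hx hy =>
      obtain ⟨n, hn, hnx⟩ := hx
      obtain ⟨k, hk, hky⟩ := hy
      refine ⟨n * k, Nat.mul_pos hn hk, ?_⟩
      have : ((n * k : ℕ) : ℤ) • (x + y)
          = (k : ℤ) • ((n : ℤ) • x) + (n : ℤ) • ((k : ℤ) • y) := by
        push_cast
        rw [smul_add, ← mul_smul, ← mul_smul, mul_comm (k : ℤ)]
      rw [this]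
      exact R.toAddSubgroup.add_mem (R.toAddSubgroup.zsmul_mem hnx _)
        (R.toAddSubgroup.zsmul_mem hky _)
  | smul q x _ hx =>
      obtain ⟨n, hn, hnx⟩ := hx
      refine ⟨q.den * n, Nat.mul_pos q.pos hn, ?_⟩
      have hc : ∀ (z : ℤ) (a : A), z • a = ((z : ℚ)) • a := fun z a =>
        (Int.cast_smul_eq_zsmul ℚ z a).symm
      have key : ((q.den * n : ℕ) : ℤ) • (q • x) = q.num • ((n : ℤ) • x) := by
        rw [hc, hc q.num, hc (n : ℤ), smul_smul, smul_smul]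
        congr 1
        push_cast
        rw [mul_right_comm, Rat.den_mul_eq_num]
      rw [key]
      exact R.toAddSubgroup.zsmul_mem hnx _

lemma exists_smul_mem {A : Type*} [Ring A] [Algebra ℚ A] (R S : Subring A)
    (hspan : Submodule.span ℚ (S : Set A) = ⊤)
    (hfg : (AddSubgroup.toIntSubmodule R.toAddSubgroup).FG) :
    ∃ m : ℤ, m ≠ 0 ∧ ∀ x ∈ R, m • x ∈ S := by
  classical
  obtain ⟨T, hT⟩ := hfg
  have hex : ∀ t : A, ∃ n : ℕ, 0 < n ∧ (n : ℤ) • t ∈ S := fun t =>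
    denom_clear S t (by rw [hspan]; trivial)
  choose f hf1 hf2 using hex
  refine ⟨(∏ t ∈ T, (f t : ℤ)), ?_, ?_⟩
  · exact Finset.prod_ne_zero_iff.mpr fun t _ => by exact_mod_cast (hf1 t).ne'
  · intro x hx
    have hxT : x ∈ Submodule.span ℤ (T : Set A) := by
      rw [hT]; exact hx
    have hle : Submodule.span ℤ (T : Set A) ≤
        (AddSubgroup.toIntSubmodule S.toAddSubgroup).comap
          ((∏ t ∈ T, (f t : ℤ)) • (LinearMap.id : A →ₗ[ℤ] A)) := by
      rw [Submodule.span_le]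
      intro t ht
      rw [SetLike.mem_coe, Submodule.mem_comap]
      show (∏ s ∈ T, (f s : ℤ)) • t ∈ S
      have ht' : t ∈ T := ht
      have : (∏ s ∈ T, (f s : ℤ)) = (∏ s ∈ T.erase t, (f s : ℤ)) * (f t : ℤ) := by
        rw [mul_comm, Finset.mul_prod_erase T (fun s => ((f s : ℕ) : ℤ)) ht']
      rw [this, mul_smul]
      exact S.toAddSubgroup.zsmul_mem (hf2 t) _
    exact hle hxT

lemma units_finite_of_smul_le {A : Type*} [Ring A] (R S : Subring A) (m : ℤ)
    (hm : m ≠ 0) (hms : ∀ x ∈ R, m • x ∈ S)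
    (hfg : (AddSubgroup.toIntSubmodule R.toAddSubgroup).FG)
    (hfin : {x : A | IsUnitOf (R ⊓ S) x}.Finite) :
    {x : A | IsUnitOf R x}.Finite := by
  set M : Submodule ℤ A := AddSubgroup.toIntSubmodule R.toAddSubgroup with hM
  haveI : Module.Finite ℤ M := Module.Finite.iff_fg.mpr hfg
  set N : Submodule ℤ M := LinearMap.range (m • (LinearMap.id : M →ₗ[ℤ] M)) with hN
  haveI : Finite (M ⧸ N) := by
    refine Module.finite_of_fg_torsion _ ?_
    intro x
    refine ⟨⟨m, mem_nonZeroDivisors_of_ne_zero hm⟩, ?_⟩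
    obtain ⟨y, rfl⟩ := Submodule.Quotient.mk_surjective N x
    rw [← Submodule.Quotient.mk_smul, Submodule.Quotient.mk_eq_zero]
    exact ⟨y, rfl⟩
  -- the class map
  classical
  let c : A → M ⧸ N := fun x =>
    if h : x ∈ R then Submodule.Quotient.mk (⟨x, h⟩ : M) else 0
  have hcover : {x : A | IsUnitOf R x} =
      ⋃ q : M ⧸ N, {x : A | IsUnitOf R x ∧ c x = q} := by
    ext x; simp
  rw [hcover]
  refine Set.finite_iUnion fun q => ?_
  rcases Set.eq_empty_or_nonempty {x : A | IsUnitOf R x ∧ c x = q} with he | ⟨v, hv⟩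
  · rw [he]; exact Set.finite_empty
  obtain ⟨⟨hvR, w, hwR, hvw, hwv⟩, hvq⟩ := hv
  refine Set.Finite.of_finite_image (f := fun x => x * w) ?_ ?_
  · refine hfin.subset ?_
    rintro _ ⟨x, ⟨⟨hxR, y, hyR, hxy, hyx⟩, hxq⟩, rfl⟩
    -- x ≡ v mod m M
    have hdiff : (⟨x, hxR⟩ : M) - ⟨v, hvR⟩ ∈ N := by
      rw [← Submodule.Quotient.eq]
      have h1 : c x = Submodule.Quotient.mk (⟨x, hxR⟩ : M) := dif_pos hxR
      have h2 : c v = Submodule.Quotient.mk (⟨v, hvR⟩ : M) := dif_pos hvR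
      rw [← h1, ← h2, hxq, hvq]
    obtain ⟨r, hr⟩ := hdiff
    have hrA : x - v = m • (r : A) := by
      have := congrArg (Subtype.val) hr
      simpa using this.symm
    have hxw : x * w = 1 + (m • (r : A)) * w := by
      have : x = v + m • (r : A) := by rw [← hrA]; abel
      rw [this, add_mul, hvw]
    have hvy : v * y = 1 - (m • (r : A)) * y := by
      have : v = x - m • (r : A) := by rw [← hrA]; abel
      rw [this, sub_mul, hxy]
    show IsUnitOf (R ⊓ S) (x * w)
    refine ⟨Subring.mem_inf.mpr ⟨?_, ?_⟩, v * y, Subring.mem_inf.mpr ⟨?_, ?_⟩, ?_, ?_⟩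
    · exact R.mul_mem hxR hwR
    · rw [hxw, smul_mul_assoc]
      exact S.add_mem (S.one_mem) (hms _ (R.mul_mem r.2 hwR))
    · exact R.mul_mem hvR hyR
    · rw [hvy, smul_mul_assoc]
      exact S.sub_mem (S.one_mem) (hms _ (R.mul_mem r.2 hyR))
    · -- (x*w) * (v*y) = 1
      calc x * w * (v * y) = x * (w * v) * y := by noncomm_ring
        _ = 1 := by rw [hwv, mul_one, hxy]
    · calc v * y * (x * w) = v * (y * x) * w := by
            rw [mul_assoc v y, mul_assoc v (y * x), mul_assoc y x]
        _ = 1 := by rw [hyx, mul_one, hvw]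
  · intro x hx x' hx' hxx'
    have h5 : x * w = x' * w := hxx'
    have : x * w * v = x' * w * v := by rw [h5]
    rwa [mul_assoc, mul_assoc, hwv, mul_one, mul_one] at this

/-- For any two orders `R₁`, `R₂` in the same finite-dimensional `ℚ`-algebra,
the unit group of `R₁` is finite if and only if the unit group of `R₂` is finite. -/
theorem stmt_5 {A : Type*} [Ring A] [Algebra ℚ A] [FiniteDimensional ℚ A]
    (R₁ R₂ : Subring A) (h₁ : IsOrder R₁) (h₂ : IsOrder R₂) :
    {x : A | IsUnitOf R₁ x}.Finite ↔ {x : A | IsUnitOf R₂ x}.Finite := by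
  obtain ⟨m₁, hm₁, hms₁⟩ := exists_smul_mem R₁ R₂ h₂.1 h₁.2
  obtain ⟨m₂, hm₂, hms₂⟩ := exists_smul_mem R₂ R₁ h₁.1 h₂.2
  have hsub₁ : {x : A | IsUnitOf (R₁ ⊓ R₂) x} ⊆ {x : A | IsUnitOf R₁ x} := by
    rintro x ⟨hx, y, hy, h⟩
    exact ⟨hx.1, y, hy.1, h⟩
  have hsub₂ : {x : A | IsUnitOf (R₂ ⊓ R₁) x} ⊆ {x : A | IsUnitOf R₂ x} := by
    rintro x ⟨hx, y, hy, h⟩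
    exact ⟨hx.1, y, hy.1, h⟩
  have hcomm : {x : A | IsUnitOf (R₁ ⊓ R₂) x} = {x : A | IsUnitOf (R₂ ⊓ R₁) x} := by
    rw [inf_comm]
  constructor
  · intro h
    exact units_finite_of_smul_le R₂ R₁ m₂ hm₂ hms₂ h₂.2 (hcomm ▸ (h.subset hsub₁))
  · intro h
    exact units_finite_of_smul_le R₁ R₂ m₁ hm₁ hms₁ h₁.2 (by rw [hcomm]; exact h.subset hsub₂)
end

section
/- Let G ≤ GL(Λ) be a finite group with infinite normalizer N_{GL(Λ)}(G), and let z ∈ V be a point whose orbit Gz spans V linearly. Then the orbit of z under N_{GL(Λ)}(G) is infinite; consequently the normalizer equivalence class of z contains infinitely many translation equivalence classes. -/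
/-!
An element of the normalizer is determined by its values on the spanning orbit `Gz`, and it maps
`Gz` onto the `G`-orbit of its value at `z`; so only finitely many normalizer elements send `z` to
any prescribed point. To control translations by `G`-fixed lattice vectors `b`, note that the
`G`-fixed vectors lie on the line through `u = ∑_{g ∈ G} g z`, because `Gz` spans `V`. If
`S z = z + b` then `S u = u + |G| b = λ u`, hence `S b = λ b`, and `λ ^ n • b ∈ Λ` for all `n ∈ ℤ`
forces `b = 0` or `λ = ±1`: at most two translations occur. So every class of `S z` modulo the
fixed lattice vectors is hit by finitely many `S`, and an infinite normalizer gives infinitely many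
classes.
-/

open Set Submodule
open scoped Pointwise

section Lattice

variable {ι V : Type*} [AddCommGroup V] [Module ℝ V] (bV : Module.Basis ι ℝ V)

theorem Module.Basis.eq_zero_of_forall_pow_smul_mem_span_int {lam : ℝ} {x : V}
    (hlam₀ : lam ≠ 0) (hlam : |lam| < 1) (h : ∀ n : ℕ, lam ^ n • x ∈ span ℤ (range bV)) :
    x = 0 := by
  refine bV.forall_coord_eq_zero_iff.mp fun i => ?_
  by_contra hx
  have hpos : 0 < |bV.repr x i| := abs_pos.mpr hx
  obtain ⟨n, hn⟩ := exists_pow_lt_of_lt_one (inv_pos.mpr hpos) hlam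
  obtain ⟨m, hm⟩ := (bV.mem_span_iff_repr_mem ℤ _).mp (h n) i
  replace hm : (m : ℝ) = lam ^ n * bV.repr x i := by simpa using hm
  have hm_lt : |(m : ℝ)| < 1 := by
    calc |(m : ℝ)| = |lam| ^ n * |bV.repr x i| := by rw [hm, abs_mul, abs_pow]
      _ < |bV.repr x i|⁻¹ * |bV.repr x i| := by gcongr
      _ = 1 := inv_mul_cancel₀ hpos.ne'
  have hm₀ : m = 0 := Int.abs_lt_one_iff.mp (by exact_mod_cast hm_lt)
  rw [hm₀, Int.cast_zero, eq_comm, mul_eq_zero] at hm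
  exact hm.elim (pow_ne_zero n hlam₀) hx

theorem LinearEquiv.apply_mem_of_mem_stabilizer {s : Set V} {c : V ≃ₗ[ℝ] V}
    (hc : c ∈ MulAction.stabilizer (V ≃ₗ[ℝ] V) s) {x : V} (hx : x ∈ s) : c x ∈ s :=
  (MulAction.mem_stabilizer_set.mp hc x).mpr hx

theorem eq_zero_of_apply_eq_smul_of_abs_lt_one {c : V ≃ₗ[ℝ] V}
    (hc : c ∈ MulAction.stabilizer (V ≃ₗ[ℝ] V) (span ℤ (range bV) : Set V)) {b : V}
    (hb : b ∈ span ℤ (range bV)) {lam : ℝ} (hcb : c b = lam • b) (hlam : |lam| < 1) :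
    b = 0 := by
  rcases eq_or_ne lam 0 with rfl | hlam₀
  · simpa using hcb
  refine bV.eq_zero_of_forall_pow_smul_mem_span_int hlam₀ hlam fun n => ?_
  induction n with
  | zero => simpa using hb
  | succ n ih =>
    have := c.apply_mem_of_mem_stabilizer hc ih
    rwa [map_smul, hcb, smul_smul, ← pow_succ] at this

theorem eq_zero_or_abs_eq_one_of_apply_eq_smul {c : V ≃ₗ[ℝ] V}
    (hc : c ∈ MulAction.stabilizer (V ≃ₗ[ℝ] V) (span ℤ (range bV) : Set V)) {b : V}
    (hb : b ∈ span ℤ (range bV)) {lam : ℝ} (hcb : c b = lam • b) : b = 0 ∨ |lam| = 1 := by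
  rcases lt_trichotomy |lam| 1 with hlt | heq | hgt
  · exact .inl (eq_zero_of_apply_eq_smul_of_abs_lt_one bV hc hb hcb hlt)
  · exact .inr heq
  · have hlam₀ : lam ≠ 0 := by rintro rfl; simp at hgt; linarith
    have hcb' : c⁻¹ b = lam⁻¹ • b := by
      rw [← c.symm_apply_apply (lam⁻¹ • b), map_smul, hcb, smul_smul, inv_mul_cancel₀ hlam₀,
        one_smul]
      rfl
    refine .inl (eq_zero_of_apply_eq_smul_of_abs_lt_one bV (inv_mem hc) hb hcb' ?_)
    rwa [abs_inv, inv_lt_one_iff₀, or_iff_right (by linarith)]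

end Lattice

section Normalizer

variable {V : Type*} [AddCommGroup V] [Module ℝ V] (Λ : Submodule ℤ V)
  (G : Subgroup (V ≃ₗ[ℝ] V))

def latticeNormalizer : Subgroup (V ≃ₗ[ℝ] V) :=
  MulAction.stabilizer (V ≃ₗ[ℝ] V) (Λ : Set V) ⊓ Subgroup.normalizer (G : Set (V ≃ₗ[ℝ] V))

theorem coe_latticeNormalizer :
    (latticeNormalizer Λ G : Set (V ≃ₗ[ℝ] V)) = {S : V ≃ₗ[ℝ] V | ⇑S '' (Λ : Set V) = (Λ : Set V) ∧
      S ∈ Subgroup.normalizer (G : Set (V ≃ₗ[ℝ] V))} :=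
  rfl

def fixedLattice : AddSubgroup V where
  carrier := {b | b ∈ Λ ∧ ∀ g ∈ G, g b = b}
  zero_mem' := ⟨Λ.zero_mem, fun g _ => map_zero g⟩
  add_mem' ha hb := ⟨Λ.add_mem ha.1 hb.1, fun g hg => by rw [map_add, ha.2 g hg, hb.2 g hg]⟩
  neg_mem' ha := ⟨Λ.neg_mem ha.1, fun g hg => by rw [map_neg, ha.2 g hg]⟩

variable {Λ G}

theorem apply_mem_fixedLattice {c : V ≃ₗ[ℝ] V} (hc : c ∈ latticeNormalizer Λ G) {b : V}
    (hb : b ∈ fixedLattice Λ G) : c b ∈ fixedLattice Λ G := by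
  refine ⟨c.apply_mem_of_mem_stabilizer hc.1 hb.1, fun g hg => ?_⟩
  have hconj : c⁻¹ * g * c ∈ G := (Subgroup.mem_normalizer_iff''.mp hc.2 g).mp hg
  calc g (c b) = c ((c⁻¹ * g * c) b) := by simp [LinearEquiv.mul_apply]
    _ = c b := by rw [hb.2 _ hconj]

theorem finite_setOf_mem_normalizer_apply_eq [Finite G] {z : V}
    (hspan : span ℝ {x | ∃ g ∈ G, x = g z} = ⊤) (w : V) :
    {c : V ≃ₗ[ℝ] V | c ∈ Subgroup.normalizer (G : Set (V ≃ₗ[ℝ] V)) ∧ c z = w}.Finite := by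
  have horbit : (range fun g : G => (g : V ≃ₗ[ℝ] V) w).Finite := finite_range _
  refine Finite.of_finite_image (f := fun c (g : G) => c ((g : V ≃ₗ[ℝ] V) z)) ?_ ?_
  · refine (Finite.pi (t := fun _ : G => _) fun _ => horbit).subset ?_
    rintro _ ⟨c, ⟨hc, rfl⟩, rfl⟩ g -
    have hconj : c * g * c⁻¹ ∈ G := (Subgroup.mem_normalizer_iff.mp hc g).mp g.2
    exact ⟨⟨_, hconj⟩, by simp [LinearEquiv.mul_apply]⟩
  · intro c _ c' _ h
    refine LinearEquiv.toLinearMap_injective (LinearMap.ext_on hspan ?_)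
    rintro _ ⟨g, hg, rfl⟩
    exact congrFun h ⟨g, hg⟩

end Normalizer

section GroupSum

variable {V : Type*} [AddCommGroup V] [Module ℝ V] (G : Subgroup (V ≃ₗ[ℝ] V)) [Fintype G]

def groupSum : V →ₗ[ℝ] V := ∑ g : G, ((g : V ≃ₗ[ℝ] V) : V →ₗ[ℝ] V)

variable {G}

theorem groupSum_apply (v : V) : groupSum G v = ∑ g : G, (g : V ≃ₗ[ℝ] V) v :=
  LinearMap.sum_apply _ _ _

theorem groupSum_apply_of_forall_apply_eq {b : V} (hb : ∀ g ∈ G, g b = b) :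
    groupSum G b = (Fintype.card G : ℝ) • b := by
  simp [groupSum_apply, hb, Nat.cast_smul_eq_nsmul]

theorem groupSum_apply_apply {g : V ≃ₗ[ℝ] V} (hg : g ∈ G) (v : V) :
    groupSum G (g v) = groupSum G v := by
  simp only [groupSum_apply]
  exact Fintype.sum_equiv (Equiv.mulRight ⟨g, hg⟩) _ _ fun h => rfl

theorem groupSum_apply_comm {c : V ≃ₗ[ℝ] V} (hc : c ∈ Subgroup.normalizer (G : Set (V ≃ₗ[ℝ] V)))
    (v : V) : groupSum G (c v) = c (groupSum G v) := by
  let conj : G ≃ G := (MulAut.conj c⁻¹).toEquiv.subtypeEquiv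
    (Subgroup.mem_normalizer_iff.mp (inv_mem hc))
  simp only [groupSum_apply, map_sum]
  exact Fintype.sum_equiv conj _ _ fun g => by simp [conj, LinearEquiv.mul_apply]

theorem exists_smul_groupSum_eq_of_forall_apply_eq {z : V}
    (hspan : span ℝ {x | ∃ g ∈ G, x = g z} = ⊤) {b : V} (hb : ∀ g ∈ G, g b = b) :
    ∃ t : ℝ, t • groupSum G z = b := by
  have hrange : ∀ v, groupSum G v ∈ span ℝ {groupSum G z} := by
    have : span ℝ {x | ∃ g ∈ G, x = g z} ≤ (span ℝ {groupSum G z}).comap (groupSum G) := by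
      refine span_le.mpr ?_
      rintro _ ⟨g, hg, rfl⟩
      simp [groupSum_apply_apply hg, mem_span_singleton_self]
    exact fun v => this (hspan ▸ mem_top)
  have hcard : (Fintype.card G : ℝ) ≠ 0 := by positivity
  have := smul_mem _ (Fintype.card G : ℝ)⁻¹ (hrange b)
  rw [groupSum_apply_of_forall_apply_eq hb, inv_smul_smul₀ hcard] at this
  exact mem_span_singleton.mp this

end GroupSum

section Main

variable {ι V : Type*} [AddCommGroup V] [Module ℝ V] (bV : Module.Basis ι ℝ V)
  {G : Subgroup (V ≃ₗ[ℝ] V)} [Fintype G] {z : V}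

theorem apply_sub_self_eq_zero_or_eq (hspan : span ℝ {x | ∃ g ∈ G, x = g z} = ⊤)
    {c : V ≃ₗ[ℝ] V} (hc : c ∈ latticeNormalizer (span ℤ (range bV)) G)
    (hcz : c z - z ∈ fixedLattice (span ℤ (range bV)) G) :
    c z - z = 0 ∨ c z - z = (-2 / Fintype.card G : ℝ) • groupSum G z := by
  set κ : ℝ := (Fintype.card G : ℝ)
  obtain ⟨t, ht⟩ := exists_smul_groupSum_eq_of_forall_apply_eq hspan hcz.2
  have hcu : c (groupSum G z) = (1 + κ * t) • groupSum G z := by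
    rw [← groupSum_apply_comm hc.2, ← sub_add_cancel (c z) z, map_add,
      groupSum_apply_of_forall_apply_eq hcz.2, ← ht]
    module
  have hcb : c (c z - z) = (1 + κ * t) • (c z - z) := by
    rw [← ht, map_smul, hcu, smul_comm]
  have hκ : κ ≠ 0 := by positivity
  rcases eq_zero_or_abs_eq_one_of_apply_eq_smul bV hc.1 hcz.1 hcb with h0 | h1
  · exact .inl h0
  rcases abs_eq zero_le_one |>.mp h1 with h1 | h1
  · left
    rw [← ht, (mul_eq_zero.mp (by linarith : κ * t = 0)).resolve_left hκ, zero_smul]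
  · right
    rw [← ht]
    congr 1
    field_simp
    linarith

theorem finite_setOf_sub_mem_fixedLattice (hspan : span ℝ {x | ∃ g ∈ G, x = g z} = ⊤)
    {c₀ : V ≃ₗ[ℝ] V} (hc₀ : c₀ ∈ latticeNormalizer (span ℤ (range bV)) G) :
    {c | c ∈ latticeNormalizer (span ℤ (range bV)) G ∧
      c z - c₀ z ∈ fixedLattice (span ℤ (range bV)) G}.Finite := by
  set B : Set V := {0, (-2 / Fintype.card G : ℝ) • groupSum G z}
  refine (((toFinite B).image fun b => c₀ z + c₀ b).biUnion fun w _ =>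
    finite_setOf_mem_normalizer_apply_eq hspan w).subset ?_
  rintro c ⟨hc, hcz⟩
  have hd : c₀⁻¹ * c ∈ latticeNormalizer (span ℤ (range bV)) G := mul_mem (inv_mem hc₀) hc
  have hdz : (c₀⁻¹ * c) z - z ∈ fixedLattice (span ℤ (range bV)) G := by
    convert apply_mem_fixedLattice (inv_mem hc₀) hcz using 1
    simp [LinearEquiv.mul_apply, map_sub]
  have hmem : (c₀⁻¹ * c) z - z ∈ B := apply_sub_self_eq_zero_or_eq bV hspan hd hdz
  refine mem_biUnion (mem_image_of_mem _ hmem) ⟨hc.2, ?_⟩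
  simp [LinearEquiv.mul_apply]

theorem infinite_image_mk_apply (hspan : span ℝ {x | ∃ g ∈ G, x = g z} = ⊤)
    (hN : (latticeNormalizer (span ℤ (range bV)) G : Set (V ≃ₗ[ℝ] V)).Infinite) :
    ((fun c : V ≃ₗ[ℝ] V => (c z : V ⧸ fixedLattice (span ℤ (range bV)) G)) ''
      latticeNormalizer (span ℤ (range bV)) G).Infinite := by
  refine fun hfin => hN (hfin.of_finite_fibers _ ?_)
  rintro _ ⟨c₀, hc₀, rfl⟩
  refine (finite_setOf_sub_mem_fixedLattice bV hspan hc₀).subset ?_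
  rintro c ⟨hc, hcz⟩
  exact ⟨hc, QuotientAddGroup.eq_iff_sub_mem.mp hcz⟩

end Main

theorem QuotientAddGroup.exists_seq_sub_notMem_of_infinite_image_mk {A : Type*} [AddCommGroup A]
    (K : AddSubgroup A) {s : Set A} (hs : ((↑) '' s : Set (A ⧸ K)).Infinite) :
    ∃ f : ℕ → A, (∀ n, f n ∈ s) ∧ ∀ n n', n ≠ n' → f n - f n' ∉ K := by
  choose f hfs hf using fun n => (hs.natEmbedding _ n).2
  refine ⟨f, hfs, fun n n' hne hK => hne ((hs.natEmbedding _).injective (Subtype.ext ?_))⟩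
  rw [← hf, ← hf, QuotientAddGroup.eq_iff_sub_mem]
  exact hK

theorem stmt_10_general {V : Type*} [AddCommGroup V] [Module ℝ V]
    {ι : Type*} (bV : Module.Basis ι ℝ V)
    (Λ : Submodule ℤ V) (hΛ : (Λ : Set V) = ↑(Submodule.span ℤ (Set.range ⇑bV)))
    (G : Subgroup (V ≃ₗ[ℝ] V)) (hGfin : Finite G)
    (hNinf : {S : V ≃ₗ[ℝ] V | ⇑S '' (Λ : Set V) = (Λ : Set V) ∧ S ∈ Subgroup.normalizer (G : Set (V ≃ₗ[ℝ] V))}.Infinite)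
    (z : V) (hspan : Submodule.span ℝ {x | ∃ g ∈ G, x = g z} = ⊤) :
    {w : V | ∃ S : V ≃ₗ[ℝ] V,
        (⇑S '' (Λ : Set V) = (Λ : Set V) ∧ S ∈ Subgroup.normalizer (G : Set (V ≃ₗ[ℝ] V))) ∧ w = S z}.Infinite ∧
    ∃ f : ℕ → V,
      (∀ n, ∃ (S : V ≃ₗ[ℝ] V) (b : V),
        (⇑S '' (Λ : Set V) = (Λ : Set V) ∧ S ∈ Subgroup.normalizer (G : Set (V ≃ₗ[ℝ] V))) ∧
        b ∈ Λ ∧ (∀ g ∈ G, g b = b) ∧ f n = S z + b) ∧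
      ∀ n n', n ≠ n' → ¬(f n - f n' ∈ Λ ∧ ∀ g ∈ G, g (f n - f n') = f n - f n') := by
  obtain rfl : Λ = span ℤ (range bV) := SetLike.coe_injective hΛ
  have := Fintype.ofFinite G
  rw [← coe_latticeNormalizer] at hNinf
  have hinf : ((↑) '' ((fun c : V ≃ₗ[ℝ] V => c z) '' latticeNormalizer (span ℤ (range bV)) G) :
      Set (V ⧸ fixedLattice (span ℤ (range bV)) G)).Infinite := by
    rw [image_image]
    exact infinite_image_mk_apply bV hspan hNinf
  refine ⟨fun hfin => hinf ((hfin.subset ?_).image _), ?_⟩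
  · rintro _ ⟨S, hS, rfl⟩
    exact ⟨S, hS, rfl⟩
  obtain ⟨f, hfN, hf⟩ := QuotientAddGroup.exists_seq_sub_notMem_of_infinite_image_mk _ hinf
  refine ⟨f, fun n => ?_, hf⟩
  obtain ⟨S, hS, hSf⟩ := hfN n
  exact ⟨S, 0, hS, zero_mem _, fun g _ => map_zero g, by rw [← hSf, add_zero]⟩

/-- If the normalizer of the finite group `G` in `GL(Λ)` is infinite and the
orbit `Gz` spans `V` linearly, then the orbit of `z` under the normalizer is infinite, and
the normalizer equivalence class of `z` contains infinitely many pairwise non-translation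
equivalent points. -/
theorem stmt_10 {V : Type*} [AddCommGroup V] [Module ℝ V] [FiniteDimensional ℝ V]
    {ι : Type*} [Fintype ι] (bV : Module.Basis ι ℝ V)
    (Λ : Submodule ℤ V) (hΛ : (Λ : Set V) = ↑(Submodule.span ℤ (Set.range ⇑bV)))
    (G : Subgroup (V ≃ₗ[ℝ] V)) (hGfin : Finite G)
    (hGΛ : ∀ g ∈ G, ⇑g '' (Λ : Set V) = (Λ : Set V))
    (hNinf : {S : V ≃ₗ[ℝ] V | ⇑S '' (Λ : Set V) = (Λ : Set V) ∧ S ∈ Subgroup.normalizer (G : Set (V ≃ₗ[ℝ] V))}.Infinite)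
    (z : V) (hspan : Submodule.span ℝ {x | ∃ g ∈ G, x = g z} = ⊤) :
    {w : V | ∃ S : V ≃ₗ[ℝ] V,
        (⇑S '' (Λ : Set V) = (Λ : Set V) ∧ S ∈ Subgroup.normalizer (G : Set (V ≃ₗ[ℝ] V))) ∧ w = S z}.Infinite ∧
    ∃ f : ℕ → V,
      (∀ n, ∃ (S : V ≃ₗ[ℝ] V) (b : V),
        (⇑S '' (Λ : Set V) = (Λ : Set V) ∧ S ∈ Subgroup.normalizer (G : Set (V ≃ₗ[ℝ] V))) ∧
        b ∈ Λ ∧ (∀ g ∈ G, g b = b) ∧ f n = S z + b) ∧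
      ∀ n n', n ≠ n' → ¬(f n - f n' ∈ Λ ∧ ∀ g ∈ G, g (f n - f n') = f n - f n') :=
  stmt_10_general bV Λ hΛ G hGfin hNinf z hspan
end

section
/- Every core point for the symmetric group S_d acting on Z^d by permuting coordinates is translation equivalent to a 0/1-vector, and conversely every 0/1-vector is a core point; moreover, up to normalizer equivalence there are exactly ⌊d/2⌋ + 1 core points for S_d. -/
/-- The set of integer vectors in `ℝ^d`. -/
def intVecs (d : ℕ) : Set (Fin d → ℝ) := {x | ∀ i, ∃ k : ℤ, x i = (k : ℝ)}

/-- The orbit of `z` under the full symmetric group permuting coordinates. -/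
def symOrbit {d : ℕ} (z : Fin d → ℝ) : Set (Fin d → ℝ) :=
  {x | ∃ σ : Equiv.Perm (Fin d), x = z ∘ ⇑σ}

/-- `z` is a core point for `S_d`: it is integral and the only integer points of the
convex hull of its orbit are the orbit points themselves. -/
def IsCoreSd {d : ℕ} (z : Fin d → ℝ) : Prop :=
  z ∈ intVecs d ∧ convexHull ℝ (symOrbit z) ∩ intVecs d = symOrbit z

/-- Normalizer equivalence for `S_d`: `w = S z + t·𝟙` with `S ∈ GL(d,ℤ)` normalizing the
group of permutation matrices and `t·𝟙` an integral fixed vector. -/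
def NormEquivSd {d : ℕ} (z w : Fin d → ℝ) : Prop :=
  ∃ (S : (Fin d → ℝ) ≃ₗ[ℝ] (Fin d → ℝ)) (t : ℤ),
    ⇑S '' intVecs d = intVecs d ∧
    (∀ σ : Equiv.Perm (Fin d), ∃ τ : Equiv.Perm (Fin d),
      ∀ x : Fin d → ℝ, S (x ∘ ⇑σ) = (S x) ∘ ⇑τ) ∧
    w = S z + fun _ => (t : ℝ)

/-!
An integer point of the convex hull of the orbit of a `0/1`-vector with `k` ones lies in the unit
cube and on the hyperplane `∑ xᵢ = k`, so it is again a `0/1`-vector with `k` ones, i.e. in the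
orbit. Conversely, if two coordinates `zᵢ + 2 ≤ zⱼ` of a core point were far apart, the point
obtained by moving one unit from `zⱼ` to `zᵢ` lies on the segment from `z` to `z ∘ (i j)`, is
integral, and has a strictly smaller sum of squares, so it is not in the orbit. Hence a core point
is a translate of a `0/1`-vector, and applying `-I` if needed it becomes one with `k ≤ d / 2`
ones. Different such `k` are not normalizer equivalent, since the normalizer preserves the size
`choose d k` of the orbit, which is strictly increasing for `k ≤ d / 2`.
-/

open Finset Function

theorem Nat.choose_lt_choose_succ_of_lt_half {n r : ℕ} (h : r < n / 2) :
    n.choose r < n.choose (r + 1) := by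
  have hpos : 0 < n.choose r := Nat.choose_pos (by omega)
  refine Nat.lt_of_mul_lt_mul_right (a := r + 1) ?_
  rw [Nat.choose_succ_right_eq]
  exact (Nat.mul_lt_mul_left hpos).2 (by omega)

theorem Nat.choose_injOn_Iic_half (n : ℕ) : Set.InjOn n.choose (Set.Iic (n / 2)) :=
  (strictMonoOn_Iic_of_lt_succ fun _ hr => by
    simpa only [Order.succ_eq_add_one] using Nat.choose_lt_choose_succ_of_lt_half hr).injOn

section

variable {d : ℕ}

theorem mem_symOrbit_self (z : Fin d → ℝ) : z ∈ symOrbit z := ⟨1, rfl⟩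

theorem comp_perm_mem_symOrbit (z : Fin d → ℝ) (σ : Equiv.Perm (Fin d)) :
    z ∘ ⇑σ ∈ symOrbit z := ⟨σ, rfl⟩

theorem sum_comp_eq_of_mem_symOrbit (φ : ℝ → ℝ) {x z : Fin d → ℝ} (hx : x ∈ symOrbit z) :
    ∑ i, φ (x i) = ∑ i, φ (z i) := by
  obtain ⟨σ, rfl⟩ := hx
  exact Equiv.sum_comp σ (φ ∘ z)

theorem symOrbit_subset_intVecs {z : Fin d → ℝ} (hz : z ∈ intVecs d) :
    symOrbit z ⊆ intVecs d := by
  rintro _ ⟨σ, rfl⟩ i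
  exact hz (σ i)

theorem update_mem_intVecs {x : Fin d → ℝ} (hx : x ∈ intVecs d) (i : Fin d) (k : ℤ) :
    update x i (k : ℝ) ∈ intVecs d := by
  intro l
  rcases eq_or_ne l i with rfl | hl
  · exact ⟨k, update_self ..⟩
  · rw [update_of_ne hl]
    exact hx l

theorem convex_setOf_sum_eq (c : ℝ) : Convex ℝ {y : Fin d → ℝ | ∑ i, y i = c} :=
  convex_hyperplane (f := fun y : Fin d → ℝ => ∑ i, y i)
    ⟨fun _ _ => sum_add_distrib, fun _ _ => (mul_sum _ _ _).symm⟩ c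

theorem sum_apply_update (φ : ℝ → ℝ) (f : Fin d → ℝ) (i : Fin d) (v : ℝ) :
    ∑ l, φ (update f i v l) = ∑ l, φ (f l) + (φ v - φ (f i)) := by
  simp only [apply_update (fun _ => φ)]
  rw [sum_update_of_mem (mem_univ i), sum_eq_add_sum_sdiff_singleton_of_mem (mem_univ i)]
  ring

theorem update_update_mem_convexHull_symOrbit (z : Fin d → ℝ) {i j : Fin d} (hij : i ≠ j)
    (hlt : z i < z j) {t : ℝ} (ht₀ : 0 ≤ t) (ht : t ≤ z j - z i) :
    update (update z i (z i + t)) j (z j - t) ∈ convexHull ℝ (symOrbit z) := by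
  set μ := t / (z j - z i)
  have hμ : μ * (z j - z i) = t := div_mul_cancel₀ _ (sub_pos.2 hlt).ne'
  have hμ₀ : 0 ≤ μ := div_nonneg ht₀ (sub_pos.2 hlt).le
  have hμ₁ : μ ≤ 1 := (div_le_one (sub_pos.2 hlt)).2 ht
  clear_value μ
  convert convex_convexHull ℝ (symOrbit z) (subset_convexHull ℝ _ (mem_symOrbit_self z))
    (subset_convexHull ℝ _ (comp_perm_mem_symOrbit z (Equiv.swap i j)))
    (sub_nonneg.2 hμ₁) hμ₀ (sub_add_cancel 1 μ) using 1
  funext l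
  simp only [Pi.add_apply, Pi.smul_apply, smul_eq_mul, comp_apply]
  rcases eq_or_ne l j with rfl | hlj
  · rw [update_self, Equiv.swap_apply_right]
    linear_combination hμ
  rcases eq_or_ne l i with rfl | hli
  · rw [update_of_ne hij, update_self, Equiv.swap_apply_left]
    linear_combination -hμ
  · rw [update_of_ne hlj, update_of_ne hli, Equiv.swap_apply_of_ne_of_ne hli hlj]
    ring

theorem IsCoreSd.le_add_one {z : Fin d → ℝ} (hz : IsCoreSd z) (i j : Fin d) :
    z j ≤ z i + 1 := by
  by_contra! hlt
  obtain ⟨a, ha⟩ := hz.1 i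
  obtain ⟨b, hb⟩ := hz.1 j
  have hij : i ≠ j := by
    rintro rfl
    linarith
  set w := update (update z i (z i + 1)) j (z j - 1)
  have hw_hull : w ∈ convexHull ℝ (symOrbit z) :=
    update_update_mem_convexHull_symOrbit z hij (by linarith) zero_le_one (by linarith)
  have hw_int : w ∈ intVecs d := by
    have := update_mem_intVecs (update_mem_intVecs hz.1 i (a + 1)) j (b - 1)
    push_cast at this
    rwa [← ha, ← hb] at this
  have hw_orbit : w ∈ symOrbit z := hz.2 ▸ ⟨hw_hull, hw_int⟩
  have hsq := sum_comp_eq_of_mem_symOrbit (· ^ 2) hw_orbit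
  have hstep₁ := sum_apply_update (· ^ 2) z i (z i + 1)
  have hstep₂ := sum_apply_update (· ^ 2) (update z i (z i + 1)) j (z j - 1)
  rw [update_of_ne hij.symm] at hstep₂
  beta_reduce at hsq hstep₁ hstep₂
  linarith

theorem IsCoreSd.exists_forall_eq_or_eq_add_one (hd : 0 < d) {z : Fin d → ℝ} (hz : IsCoreSd z) :
    ∃ t : ℤ, ∀ i, z i = t ∨ z i = t + 1 := by
  have : Nonempty (Fin d) := ⟨⟨0, hd⟩⟩
  obtain ⟨i₀, hi₀⟩ := Finite.exists_min z
  obtain ⟨t, ht⟩ := hz.1 i₀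
  refine ⟨t, fun i => ?_⟩
  obtain ⟨k, hk⟩ := hz.1 i
  have hlo : t ≤ k := by exact_mod_cast ht ▸ hk ▸ hi₀ i
  have hhi : k ≤ t + 1 := by exact_mod_cast ht ▸ hk ▸ hz.le_add_one i₀ i
  rcases (show k = t ∨ k = t + 1 by omega) with rfl | rfl
  · exact .inl hk
  · exact .inr (by rw [hk]; push_cast; ring)

def indicatorVec (s : Finset (Fin d)) : Fin d → ℝ := fun i => if i ∈ s then 1 else 0

theorem indicatorVec_injective : Injective (indicatorVec (d := d)) := by
  intro s t hst
  ext i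
  have := congrFun hst i
  by_cases hs : i ∈ s <;> by_cases ht : i ∈ t <;> simp_all [indicatorVec]

theorem indicatorVec_eq_zero_or_eq_one (s : Finset (Fin d)) (i : Fin d) :
    indicatorVec s i = 0 ∨ indicatorVec s i = 1 := by
  unfold indicatorVec
  split_ifs <;> simp

theorem eq_indicatorVec_of_eq_zero_or_eq_one {x : Fin d → ℝ} (hx : ∀ i, x i = 0 ∨ x i = 1) :
    x = indicatorVec {i | x i = 1} := by
  funext i
  rcases hx i with h | h <;> simp [indicatorVec, h]

theorem indicatorVec_compl (s : Finset (Fin d)) : indicatorVec sᶜ = 1 - indicatorVec s := by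
  funext i
  by_cases hi : i ∈ s <;> simp [indicatorVec, hi]

theorem indicatorVec_map_comp_perm (s : Finset (Fin d)) (σ : Equiv.Perm (Fin d)) :
    indicatorVec (s.map σ.toEmbedding) ∘ ⇑σ = indicatorVec s := by
  funext i
  simp [indicatorVec]

theorem sum_indicatorVec (s : Finset (Fin d)) : ∑ i, indicatorVec s i = s.card := by
  simp [indicatorVec]

theorem symOrbit_indicatorVec (s : Finset (Fin d)) :
    symOrbit (indicatorVec s) = indicatorVec '' {t | t.card = s.card} := by
  ext x
  constructor
  · rintro ⟨σ, rfl⟩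
    refine ⟨s.map σ.symm.toEmbedding, card_map _, ?_⟩
    funext i
    simp [indicatorVec]
  · rintro ⟨t, ht, rfl⟩
    obtain ⟨σ, hσ⟩ := Equiv.Perm.exists_map_finset_eq t s ht
    exact ⟨σ, by rw [← hσ, indicatorVec_map_comp_perm]⟩

theorem ncard_symOrbit_indicatorVec (s : Finset (Fin d)) :
    (symOrbit (indicatorVec s)).ncard = d.choose s.card := by
  have : {t : Finset (Fin d) | t.card = s.card} =
      ((powersetCard s.card univ : Finset (Finset (Fin d))) : Set (Finset (Fin d))) := by
    ext
    simp
  rw [symOrbit_indicatorVec, Set.ncard_image_of_injective _ indicatorVec_injective, this,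
    Set.ncard_coe_finset, card_powersetCard, card_univ, Fintype.card_fin]

theorem isCoreSd_indicatorVec (s : Finset (Fin d)) : IsCoreSd (indicatorVec s) := by
  have hint : indicatorVec s ∈ intVecs d := fun i => by
    rcases indicatorVec_eq_zero_or_eq_one s i with h | h
    exacts [⟨0, by simp [h]⟩, ⟨1, by simp [h]⟩]
  refine ⟨hint, subset_antisymm ?_ fun x hx =>
    ⟨subset_convexHull ℝ _ hx, symOrbit_subset_intVecs hint hx⟩⟩
  rintro x ⟨hx_hull, hx_int⟩
  have hsub : symOrbit (indicatorVec s) ⊆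
      Set.univ.pi (fun _ => Set.Icc (0 : ℝ) 1) ∩ {y | ∑ i, y i = s.card} := by
    rintro y hy
    refine ⟨fun i _ => ?_, (sum_comp_eq_of_mem_symOrbit id hy).trans (sum_indicatorVec s)⟩
    obtain ⟨σ, rfl⟩ := hy
    rcases indicatorVec_eq_zero_or_eq_one s (σ i) with h | h <;> simp [h]
  have hconv : Convex ℝ (Set.univ.pi (fun _ => Set.Icc (0 : ℝ) 1) ∩
      {y : Fin d → ℝ | ∑ i, y i = s.card}) :=
    (convex_pi fun _ _ => convex_Icc 0 1).inter (convex_setOf_sum_eq _)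
  obtain ⟨hbox, hsum⟩ := convexHull_min hsub hconv hx_hull
  have hx01 : ∀ i, x i = 0 ∨ x i = 1 := fun i => by
    obtain ⟨k, hk⟩ := hx_int i
    have hk01 := hbox i (Set.mem_univ i)
    rw [hk] at hk01
    have : 0 ≤ k ∧ k ≤ 1 := ⟨by exact_mod_cast hk01.1, by exact_mod_cast hk01.2⟩
    rcases (show k = 0 ∨ k = 1 by omega) with rfl | rfl <;> simp [hk]
  rw [eq_indicatorVec_of_eq_zero_or_eq_one hx01] at hsum ⊢
  rw [symOrbit_indicatorVec]
  exact ⟨_, by exact_mod_cast (sum_indicatorVec _).symm.trans hsum, rfl⟩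

theorem NormEquivSd.ncard_symOrbit_eq {z w : Fin d → ℝ} (h : NormEquivSd z w) :
    (symOrbit z).ncard = (symOrbit w).ncard := by
  obtain ⟨S, t, -, hnorm, rfl⟩ := h
  choose τ hτ using hnorm
  -- `τ σ` determines `σ`: apply `S⁻¹` and read off how `σ` reorders `(0, 1, …, d - 1)`.
  have hτ_bij : Bijective τ := by
    refine Finite.injective_iff_bijective.1 fun σ₁ σ₂ h => Equiv.ext fun i => ?_
    have hcomp : (fun j : Fin d => (j : ℝ)) ∘ ⇑σ₁ = (fun j : Fin d => (j : ℝ)) ∘ ⇑σ₂ :=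
      S.injective (by rw [hτ, hτ, h])
    exact Fin.ext (Nat.cast_injective (R := ℝ) (congrFun hcomp i))
  set F : (Fin d → ℝ) → (Fin d → ℝ) := fun x => S x + fun _ => (t : ℝ)
  have horbit : symOrbit (F z) = F '' symOrbit z := by
    ext y
    constructor
    · rintro ⟨π, rfl⟩
      obtain ⟨σ, rfl⟩ := hτ_bij.2 π
      exact ⟨z ∘ ⇑σ, comp_perm_mem_symOrbit z σ, by simp only [F, hτ]; rfl⟩
    · rintro ⟨_, ⟨σ, rfl⟩, rfl⟩
      exact ⟨τ σ, by simp only [F, hτ]; rfl⟩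
  rw [horbit, Set.ncard_image_of_injective _ fun x y hxy => S.injective (add_right_cancel hxy)]

theorem image_funCongrLeft_intVecs (σ : Equiv.Perm (Fin d)) :
    ⇑(LinearEquiv.funCongrLeft ℝ ℝ σ) '' intVecs d = intVecs d := by
  refine subset_antisymm ?_ fun y hy => ⟨y ∘ ⇑σ.symm, fun i => hy _, ?_⟩
  · rintro _ ⟨x, hx, rfl⟩ i
    exact hx (σ i)
  · funext i
    simp [LinearEquiv.funCongrLeft_apply, LinearMap.funLeft_apply]

theorem neg_mem_intVecs {x : Fin d → ℝ} (hx : x ∈ intVecs d) : -x ∈ intVecs d := fun i => by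
  obtain ⟨k, hk⟩ := hx i
  exact ⟨-k, by simp [hk]⟩

theorem image_neg_intVecs : (fun x => -x) '' intVecs d = intVecs d :=
  subset_antisymm (Set.image_subset_iff.2 fun _ => neg_mem_intVecs)
    fun x hx => ⟨-x, neg_mem_intVecs hx, neg_neg x⟩

theorem funCongrLeft_comp_perm (σ π : Equiv.Perm (Fin d)) (x : Fin d → ℝ) :
    LinearEquiv.funCongrLeft ℝ ℝ σ (x ∘ ⇑π) =
      LinearEquiv.funCongrLeft ℝ ℝ σ x ∘ ⇑(σ⁻¹ * π * σ) := by
  funext i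
  simp [LinearEquiv.funCongrLeft_apply, LinearMap.funLeft_apply]

theorem normEquivSd_comp_perm_add (z : Fin d → ℝ) (σ : Equiv.Perm (Fin d)) (t : ℤ) :
    NormEquivSd z (z ∘ ⇑σ + fun _ => (t : ℝ)) :=
  ⟨LinearEquiv.funCongrLeft ℝ ℝ σ, t, image_funCongrLeft_intVecs σ,
    fun π => ⟨_, funCongrLeft_comp_perm σ π⟩, rfl⟩

theorem normEquivSd_neg_comp_perm_add (z : Fin d → ℝ) (σ : Equiv.Perm (Fin d)) (t : ℤ) :
    NormEquivSd z (-(z ∘ ⇑σ) + fun _ => (t : ℝ)) := by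
  refine ⟨(LinearEquiv.funCongrLeft ℝ ℝ σ).trans (LinearEquiv.neg ℝ), t, ?_,
    fun π => ⟨σ⁻¹ * π * σ, fun x => ?_⟩, rfl⟩
  · rw [show ⇑((LinearEquiv.funCongrLeft ℝ ℝ σ).trans (LinearEquiv.neg ℝ)) =
        (fun x => -x) ∘ ⇑(LinearEquiv.funCongrLeft ℝ ℝ σ) from rfl,
      Set.image_comp, image_funCongrLeft_intVecs, image_neg_intVecs]
  · rw [LinearEquiv.trans_apply, funCongrLeft_comp_perm]
    rfl

theorem IsCoreSd.exists_le_half_normEquivSd_indicatorVec (hd : 0 < d) {z : Fin d → ℝ}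
    (hz : IsCoreSd z) :
    ∃ k ≤ d / 2, ∀ s : Finset (Fin d), s.card = k → NormEquivSd z (indicatorVec s) := by
  obtain ⟨t, ht⟩ := hz.exists_forall_eq_or_eq_add_one hd
  set u : Finset (Fin d) := {i | z i = t + 1}
  have hz_eq : ∀ i, z i = indicatorVec u i + t := fun i => by
    rcases ht i with h | h <;> simp [u, indicatorVec, h, add_comm]
  rcases le_or_gt u.card (d / 2) with hu | hu
  · refine ⟨u.card, hu, fun s hs => ?_⟩
    obtain ⟨σ, hσ⟩ := Equiv.Perm.exists_map_finset_eq s u hs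
    convert normEquivSd_comp_perm_add z σ (-t) using 1
    funext i
    have := congrFun (indicatorVec_map_comp_perm s σ) i
    rw [hσ] at this
    simp only [Pi.add_apply, comp_apply, hz_eq] at this ⊢
    push_cast
    linarith
  · refine ⟨uᶜ.card, by rw [card_compl, Fintype.card_fin]; omega, fun s hs => ?_⟩
    obtain ⟨σ, hσ⟩ := Equiv.Perm.exists_map_finset_eq s uᶜ hs
    convert normEquivSd_neg_comp_perm_add z σ (t + 1) using 1
    funext i
    have := congrFun (indicatorVec_map_comp_perm s σ) i
    rw [hσ, indicatorVec_compl] at this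
    simp only [Pi.add_apply, Pi.sub_apply, Pi.neg_apply, Pi.one_apply, comp_apply, hz_eq] at this ⊢
    push_cast
    linarith

end

/-- Every core point for `S_d` is translation equivalent to a `0/1`-vector,
every `0/1`-vector is a core point, and there are exactly `⌊d/2⌋ + 1` core points up to
normalizer equivalence. -/
theorem stmt_11 {d : ℕ} (hd : 0 < d) :
    (∀ z : Fin d → ℝ, IsCoreSd z → ∃ t : ℤ, ∀ i, z i = (t : ℝ) ∨ z i = (t : ℝ) + 1) ∧
    (∀ z : Fin d → ℝ, (∀ i, z i = 0 ∨ z i = 1) → IsCoreSd z) ∧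
    (∃ reps : Fin (d / 2 + 1) → (Fin d → ℝ),
      (∀ k, IsCoreSd (reps k)) ∧
      (∀ k l, k ≠ l → ¬ NormEquivSd (reps k) (reps l)) ∧
      (∀ z, IsCoreSd z → ∃ k, NormEquivSd z (reps k))) := by
  have hsupport : ∀ k : Fin (d / 2 + 1), ∃ s : Finset (Fin d), s.card = k := fun k =>
    (exists_subset_card_eq (s := univ) (by simp; omega)).imp fun _ h => h.2
  choose R hR using hsupport
  refine ⟨fun z hz => hz.exists_forall_eq_or_eq_add_one hd,
    fun z hz => eq_indicatorVec_of_eq_zero_or_eq_one hz ▸ isCoreSd_indicatorVec _,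
    fun k => indicatorVec (R k), fun k => isCoreSd_indicatorVec _, ?_, ?_⟩
  · intro k l hkl hequiv
    have hcard := hequiv.ncard_symOrbit_eq
    rw [ncard_symOrbit_indicatorVec, ncard_symOrbit_indicatorVec, hR, hR] at hcard
    exact hkl (Fin.ext (Nat.choose_injOn_Iic_half d (Nat.le_of_lt_succ k.2)
      (Nat.le_of_lt_succ l.2) hcard))
  · intro z hz
    obtain ⟨k, hk, hequiv⟩ := hz.exists_le_half_normEquivSd_indicatorVec hd
    exact ⟨⟨k, Nat.lt_succ_of_le hk⟩, hequiv _ (hR _)⟩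
end

section
/- For the cyclic group C₄ = ⟨(1,2,3,4)⟩ acting on Z⁴ by cyclically permuting coordinates, every point of the form (1+m, −m, m, −m)ᵗ with m ∈ Z is a core point, and distinct values of m give points that are pairwise not translation equivalent. -/
/-!
The orbit of `z = (1+m, -m, m, -m)` consists of `z` and its three cyclic shifts. On these four
points the functional `x₀ - x₂` takes the values `1, 0, -1, 0` and `x₃ - x₁` the values
`0, 1, 0, -1`, so each orbit point is the unique maximiser over the orbit of one of `±(x₀ - x₂)`,
`±(x₃ - x₁)`, and an integral point of the hull at which that functional is at least `1` must be
this orbit point. In the remaining case `x₀ = x₂` and `x₁ = x₃`, so the coordinate sum, which is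
`1` on the whole hull, would be even.
-/

/-- The orbit of `z ∈ ℝ⁴` under the cyclic group `C₄` generated by the 4-cycle. -/
def c4Orbit (z : Fin 4 → ℝ) : Set (Fin 4 → ℝ) :=
  {x | ∃ k : ℕ, x = z ∘ ⇑((finRotate 4) ^ k)}

theorem eq_of_mem_convexHull_of_le_apply {𝕜 E : Type*} [Field 𝕜] [LinearOrder 𝕜]
    [IsStrictOrderedRing 𝕜] [AddCommGroup E] [Module 𝕜 E] {s : Set E} {p x : E}
    (φ : E →ₗ[𝕜] 𝕜) {c : 𝕜} (hp : φ p ≤ c) (hs : ∀ y ∈ s, φ y < c ∨ y = p) (hx : x ∈ convexHull 𝕜 s)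
    (hc : c ≤ φ x) : x = p := by
  set t := {y ∈ s | φ y < c}
  have hst : s ⊆ insert p t := fun y hy => (hs y hy).elim (fun h => Or.inr ⟨hy, h⟩) Or.inl
  have htc : convexHull 𝕜 t ⊆ {y | φ y < c} :=
    convexHull_min (fun y hy => hy.2) (convex_halfSpace_lt φ.isLinear c)
  replace hx := convexHull_mono hst hx
  rcases t.eq_empty_or_nonempty with ht | ht
  · simpa [ht] using hx
  rw [convexHull_insert ht, mem_convexJoin] at hx
  obtain ⟨q, hq, y, hy, a, b, ha, hb, hab, rfl⟩ := hx
  rw [Set.mem_singleton_iff] at hq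
  subst q
  have hφy : φ y < c := htc hy
  rcases hb.eq_or_lt with rfl | hb
  · simp [show a = 1 by linarith]
  · refine absurd hc (not_le.2 ?_)
    calc φ (a • p + b • y) = a * φ p + b * φ y := by simp
      _ < a * c + b * c := add_lt_add_of_le_of_lt (mul_le_mul_of_nonneg_left hp ha)
          (mul_lt_mul_of_pos_left hφy hb)
      _ = c := by rw [← add_mul, hab, one_mul]

theorem c4Orbit_vecCons (a b c d : ℝ) :
    c4Orbit ![a, b, c, d] = {![a, b, c, d], ![b, c, d, a], ![c, d, a, b], ![d, a, b, c]} := by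
  have hrot : finRotate 4 ^ 4 = 1 := by decide
  ext x
  simp only [c4Orbit, Set.mem_ofPred_eq, Set.mem_insert_iff, Set.mem_singleton_iff]
  constructor
  · rintro ⟨k, rfl⟩
    rw [pow_eq_pow_mod k hrot]
    have : k % 4 < 4 := Nat.mod_lt _ (by norm_num)
    interval_cases k % 4
    · left; rfl
    · right; left; ext i; fin_cases i <;> rfl
    · right; right; left; ext i; fin_cases i <;> rfl
    · right; right; right; ext i; fin_cases i <;> rfl
  · rintro (rfl | rfl | rfl | rfl)
    exacts [⟨0, rfl⟩, ⟨1, by ext i; fin_cases i <;> rfl⟩, ⟨2, by ext i; fin_cases i <;> rfl⟩,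
      ⟨3, by ext i; fin_cases i <;> rfl⟩]

theorem sum_eq_of_mem_convexHull_c4Orbit {z x : Fin 4 → ℝ} (hx : x ∈ convexHull ℝ (c4Orbit z)) :
    ∑ i, x i = ∑ i, z i := by
  refine convexHull_min ?_
    (convex_hyperplane (∑ i, LinearMap.proj i : (Fin 4 → ℝ) →ₗ[ℝ] ℝ).isLinear _) hx
  rintro _ ⟨k, rfl⟩
  simp [Equiv.sum_comp]

theorem forall_int_of_mem_c4Orbit {z x : Fin 4 → ℝ} (hz : ∀ i, ∃ k : ℤ, z i = k)
    (hx : x ∈ c4Orbit z) : ∀ i, ∃ k : ℤ, x i = k := by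
  obtain ⟨n, rfl⟩ := hx
  exact fun i => hz _

theorem mem_c4Orbit_of_mem_convexHull_of_int (m : ℤ) {x : Fin 4 → ℝ}
    (hx : x ∈ convexHull ℝ (c4Orbit ![1 + (m : ℝ), -(m : ℝ), (m : ℝ), -(m : ℝ)]))
    (hint : ∀ i, ∃ k : ℤ, x i = k) :
    x ∈ c4Orbit ![1 + (m : ℝ), -(m : ℝ), (m : ℝ), -(m : ℝ)] := by
  set S := c4Orbit ![1 + (m : ℝ), -(m : ℝ), (m : ℝ), -(m : ℝ)] with hS
  rw [c4Orbit_vecCons] at hS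
  choose k hk using hint
  have hsum : k 0 + k 1 + k 2 + k 3 = 1 := by
    have := sum_eq_of_mem_convexHull_c4Orbit hx
    simp only [hk, Fin.sum_univ_four, Matrix.cons_val_zero, Matrix.cons_val_one, Matrix.cons_val,
      add_neg_cancel_right] at this
    exact_mod_cast this
  have vertex : ∀ (i j : Fin 4) (p : Fin 4 → ℝ), p i - p j = 1 →
      (∀ y ∈ S, y i - y j < 1 ∨ y = p) → k j < k i → x = p := by
    intro i j p hp hs hij
    let φ : (Fin 4 → ℝ) →ₗ[ℝ] ℝ := .proj i - .proj j
    refine eq_of_mem_convexHull_of_le_apply φ hp.le hs hx ?_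
    change 1 ≤ x i - x j
    rw [hk, hk]
    exact_mod_cast (show (1 : ℤ) ≤ k i - k j by omega)
  rw [hS]
  simp only [Set.mem_insert_iff, Set.mem_singleton_iff]
  -- otherwise `x₀ = x₂` and `x₁ = x₃`, and the coordinate sum `1` would be even
  obtain h | h | h | h : k 2 < k 0 ∨ k 1 < k 3 ∨ k 0 < k 2 ∨ k 3 < k 1 := by omega
  · exact Or.inl (vertex 0 2 _ (by simp) (by simp [hS]) h)
  · exact Or.inr (Or.inl (vertex 3 1 _ (by simp) (by simp [hS]) h))
  · exact Or.inr (Or.inr (Or.inl (vertex 2 0 _ (by simp) (by simp [hS]) h)))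
  · exact Or.inr (Or.inr (Or.inr (vertex 1 3 _ (by simp) (by simp [hS]) h)))

/-- For every `m ∈ ℤ`, the point `(1+m, −m, m, −m)ᵗ` is a core point for
`C₄` acting on `ℤ⁴` by cyclic coordinate permutation, and distinct values of `m` give
points that are not translation equivalent (their difference is not an integer multiple of
the all-ones vector). -/
theorem stmt_12 :
    (∀ m : ℤ,
      convexHull ℝ (c4Orbit ![1 + (m : ℝ), -(m : ℝ), (m : ℝ), -(m : ℝ)]) ∩
          {x : Fin 4 → ℝ | ∀ i, ∃ k : ℤ, x i = (k : ℝ)} =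
        c4Orbit ![1 + (m : ℝ), -(m : ℝ), (m : ℝ), -(m : ℝ)]) ∧
    ∀ m m' : ℤ, m ≠ m' → ∀ t : ℤ,
      (![1 + (m : ℝ), -(m : ℝ), (m : ℝ), -(m : ℝ)] -
        ![1 + (m' : ℝ), -(m' : ℝ), (m' : ℝ), -(m' : ℝ)]) ≠ fun _ => (t : ℝ) := by
  refine ⟨fun m => ?_, fun m m' hmm' t h => hmm' ?_⟩
  · have hz : ∀ i, ∃ k : ℤ, ![1 + (m : ℝ), -(m : ℝ), (m : ℝ), -(m : ℝ)] i = k :=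
      fun i => ⟨![1 + m, -m, m, -m] i, by fin_cases i <;> simp⟩
    ext x
    exact ⟨fun ⟨hx, hint⟩ => mem_c4Orbit_of_mem_convexHull_of_int m hx hint,
      fun hx => ⟨subset_convexHull ℝ _ hx, forall_int_of_mem_c4Orbit hz hx⟩⟩
  · have h0 := congrFun h 0
    have h1 := congrFun h 1
    simp only [Pi.sub_apply, Matrix.cons_val_zero, Matrix.cons_val_one] at h0 h1
    exact_mod_cast (by linarith : (m : ℝ) = m')
end
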